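/- arXiv:2604.27164 — 2 statements merged into one kernel-verified Lean document; each statement's English description precedes it below -/
import Mathlib

section
/- Let X be an N×N matrix whose entries X_{ij} are pairwise anticommuting odd generators of an exterior algebra (so X_{ij}X_{kl} = -X_{kl}X_{ij} for all index pairs, in particular X_{ij}^2 = 0). If p is even, then Tr(X^p) = 0. -/
open ExteriorAlgebra

def path {N q : ℕ} (i j : Fin N) (c : Fin q → Fin N) : Fin (q+2) → Fin N :=
  Fin.cons i (Fin.snoc c j)

lemma path_cons {N q : ℕ} (i j x : Fin N) (c : Fin q → Fin N) :
    path i j (Fin.cons x c) = Fin.cons i (path x j c) := by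
  unfold path
  rw [← Fin.cons_snoc_eq_snoc_cons]

lemma pow_entry {A : Type*} [Ring A] {N : ℕ} (M : Matrix (Fin N) (Fin N) A) :
    ∀ (q : ℕ) (i j : Fin N), (M ^ (q+1)) i j =
      ∑ c : Fin q → Fin N, (List.ofFn fun m : Fin (q+1) =>
        M (path i j c m.castSucc) (path i j c m.succ)).prod := by
  intro q
  induction q with
  | zero =>
    intro i j
    simp [pow_one, List.ofFn_succ, path, Fin.snoc]
  | succ q ih =>
    intro i j
    rw [pow_succ', Matrix.mul_apply]
    simp_rw [ih, Finset.mul_sum]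
    rw [← (Fin.consEquiv (fun _ : Fin (q+1) => Fin N)).sum_comp, Fintype.sum_prod_type]
    refine Finset.sum_congr rfl fun x _ => Finset.sum_congr rfl fun c _ => ?_
    show _ = (List.ofFn fun m : Fin (q+2) =>
        M (path i j (Fin.cons x c) m.castSucc) (path i j (Fin.cons x c) m.succ)).prod
    rw [path_cons]
    conv_rhs => rw [List.ofFn_succ]
    rw [List.prod_cons]
    simp [path, ← Fin.succ_castSucc]

lemma trace_pow {A : Type*} [Ring A] {N : ℕ} (M : Matrix (Fin N) (Fin N) A) (n : ℕ) :
    Matrix.trace (M ^ (n+1)) = ∑ c : Fin (n+1) → Fin N,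
      (List.ofFn fun m : Fin (n+1) => M (c m) (c (finRotate (n+1) m))).prod := by
  rw [Matrix.trace]
  simp_rw [Matrix.diag_apply, pow_entry M n]
  rw [← (Fin.consEquiv (fun _ : Fin (n+1) => Fin N)).sum_comp, Fintype.sum_prod_type]
  simp only [Fin.consEquiv_apply]
  refine Finset.sum_congr rfl fun i _ => Finset.sum_congr rfl fun c _ => ?_
  have h1 : ∀ m : Fin (n+1), path i i c m.castSucc = (Fin.cons i c : Fin (n+1) → Fin N) m := by
    intro m
    induction m using Fin.cases with
    | zero => rfl
    | succ m' =>
      rw [← Fin.succ_castSucc]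
      unfold path
      rw [Fin.cons_succ, Fin.snoc_castSucc, Fin.cons_succ]
  have h2 : ∀ m : Fin (n+1), path i i c m.succ = (Fin.cons i c : Fin (n+1) → Fin N) (finRotate (n+1) m) := by
    intro m
    rw [finRotate_succ_apply]
    induction m using Fin.lastCases with
    | last =>
      unfold path
      rw [Fin.cons_succ, Fin.snoc_last, Fin.last_add_one, Fin.cons_zero]
    | cast m' =>
      unfold path
      rw [Fin.cons_succ, Fin.snoc_castSucc, Fin.coeSucc_eq_succ, Fin.cons_succ]
  congr 1
  simp only [h1, h2]


section Comb
variable {R : Type*} [CommRing R] {N n : ℕ}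

/-- vector sequence attached to a cyclic index function -/
def vc (R : Type*) [CommRing R] {N n : ℕ} (c : Fin (n+1) → Fin N) :
    Fin (n+1) → ((Fin N × Fin N) → R) :=
  fun m => Pi.single (c m, c (finRotate (n+1) m)) (1 : R)

noncomputable def trm (R : Type*) [CommRing R] {N n : ℕ} (c : Fin (n+1) → Fin N) :
    ExteriorAlgebra R ((Fin N × Fin N) → R) :=
  ιMulti R (n+1) (vc R c)

def Rj {N n : ℕ} (c : Fin (n+1) → Fin N) (j : ℕ) : Fin (n+1) → Fin N :=
  c ∘ ⇑(finRotate (n+1) ^ j)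

open Fin.NatCast Fin.CommRing in
lemma finRotate_pow_apply (n d : ℕ) (m : Fin (n+1)) :
    (finRotate (n+1) ^ d) m = m + (d : Fin (n+1)) := by
  induction d with
  | zero => simp
  | succ d ih =>
    rw [pow_succ', Equiv.Perm.mul_apply, ih, finRotate_succ_apply]
    push_cast
    ring

lemma Rj_add (c : Fin (n+1) → Fin N) (a b : ℕ) : Rj c (a + b) = Rj (Rj c a) b := by
  funext m
  simp [Rj, pow_add, Equiv.Perm.mul_apply]

lemma Rj_zero (c : Fin (n+1) → Fin N) : Rj c 0 = c := by
  funext m; simp [Rj]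

open Fin.NatCast in
lemma Rj_period (c : Fin (n+1) → Fin N) : Rj c (n+1) = c := by
  funext m
  simp [Rj, finRotate_pow_apply, Fin.natCast_self]

lemma Rj_one (c : Fin (n+1) → Fin N) : Rj c 1 = c ∘ ⇑(finRotate (n+1)) := by
  funext m; simp [Rj]

lemma trm_rot (hn : Odd n) (c : Fin (n+1) → Fin N) :
    trm R (Rj c 1) = - trm R c := by
  have hv : vc R (Rj c 1) = vc R c ∘ ⇑(finRotate (n+1)) := by
    funext m
    simp [vc, Rj_one]
  rw [trm, hv, AlternatingMap.map_perm, sign_finRotate, Nat.add_sub_cancel, hn.neg_one_pow]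
  simp [Units.smul_def, trm]

open Fin.NatCast in
lemma trm_zero (c : Fin (n+1) → Fin N) (d : ℕ) (h0 : 0 < d) (h1 : d < n+1)
    (h : Rj c d = c) : trm R c = 0 := by
  apply AlternatingMap.map_eq_zero_of_eq _ _ (i := ((d : ℕ) : Fin (n+1))) (j := (0 : Fin (n+1)))
  · -- vc R c d = vc R c 0
    have hd : ((d : ℕ) : Fin (n+1)) = (finRotate (n+1) ^ d) 0 := by
      rw [finRotate_pow_apply, zero_add]
    have hc : ∀ m, c ((finRotate (n+1) ^ d) m) = c m := fun m => congrFun h m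
    have hcomm : ∀ x, finRotate (n+1) ((finRotate (n+1) ^ d) x)
        = (finRotate (n+1) ^ d) (finRotate (n+1) x) := by
      intro x
      rw [← Equiv.Perm.mul_apply, ← Equiv.Perm.mul_apply, ← pow_succ, ← pow_succ']
    show Pi.single (c _, c (finRotate (n+1) _)) 1 = Pi.single (c _, c (finRotate (n+1) _)) 1
    rw [hd, hc, hcomm, hc]
  · -- index nonzero
    intro hEq
    rw [Fin.ext_iff, Fin.val_natCast, Fin.val_zero] at hEq
    rw [Nat.mod_eq_of_lt h1] at hEq
    omega

end Comb

section Min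
variable {N n : ℕ}

noncomputable def ordf {N n : ℕ} (c : Fin (n+1) → Fin N) : ℕ :=
  (Fintype.equivFin (Fin (n+1) → Fin N) c : ℕ)

lemma ordf_inj : Function.Injective (ordf (N := N) (n := n)) :=
  fun _ _ h => (Fintype.equivFin _).injective (Fin.val_injective h)

noncomputable def Sorb (c : Fin (n+1) → Fin N) : Finset ℕ :=
  (Finset.range (n+1)).image fun j => ordf (Rj c j)

lemma Sorb_ne (c : Fin (n+1) → Fin N) : (Sorb c).Nonempty :=
  ⟨ordf (Rj c 0), Finset.mem_image_of_mem _ (Finset.mem_range.2 (Nat.succ_pos n))⟩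

noncomputable def mval (c : Fin (n+1) → Fin N) : ℕ := (Sorb c).min' (Sorb_ne c)

def PE (c : Fin (n+1) → Fin N) : Prop :=
  ∃ j, j < n+1 ∧ j % 2 = 0 ∧ ordf (Rj c j) = mval c

def Ap (c : Fin (n+1) → Fin N) : Prop := ∀ d, 0 < d → d < n+1 → Rj c d ≠ c

lemma exists_min (c : Fin (n+1) → Fin N) : ∃ j, j < n+1 ∧ ordf (Rj c j) = mval c := by
  have := (Sorb c).min'_mem (Sorb_ne c)
  simp only [Sorb, Finset.mem_image, Finset.mem_range] at this
  obtain ⟨j, hj, hj2⟩ := this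
  exact ⟨j, hj, hj2⟩

lemma ap_inj {c : Fin (n+1) → Fin N} (hc : Ap c) :
    ∀ a b, a < n+1 → b < n+1 → ordf (Rj c a) = ordf (Rj c b) → a = b := by
  have key : ∀ a b, a < n+1 → b < n+1 → a < b → Rj c a ≠ Rj c b := by
    intro a b ha hb hab hEq
    have h1 : Rj c (a + (n+1-b)) = c := by
      rw [Rj_add, hEq, ← Rj_add]
      have : b + (n+1-b) = n+1 := by omega
      rw [this, Rj_period]
    exact hc (a + (n+1-b)) (by omega) (by omega) h1
  intro a b ha hb hEq
  have h' := ordf_inj hEq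
  rcases lt_trichotomy a b with h | h | h
  · exact absurd h' (key a b ha hb h)
  · exact h
  · exact absurd h'.symm (key b a hb ha h)

lemma mval_rot (c : Fin (n+1) → Fin N) : mval (Rj c 1) = mval c := by
  have hS : Sorb (Rj c 1) = Sorb c := by
    ext x
    simp only [Sorb, Finset.mem_image, Finset.mem_range]
    constructor
    · rintro ⟨j, hj, rfl⟩
      rw [← Rj_add]
      by_cases h : 1 + j < n + 1
      · exact ⟨1 + j, h, rfl⟩
      · have : 1 + j = n + 1 := by omega
        rw [this, Rj_period, ← Rj_zero c]
        exact ⟨0, by omega, by rw [Rj_zero]⟩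
    · rintro ⟨j, hj, rfl⟩
      by_cases h : j = 0
      · refine ⟨n, by omega, ?_⟩
        rw [← Rj_add]
        have : 1 + n = n + 1 := by omega
        rw [this, Rj_period, h, Rj_zero]
      · refine ⟨j - 1, by omega, ?_⟩
        rw [← Rj_add]
        have : 1 + (j-1) = j := by omega
        rw [this]
  rw [mval, mval]
  congr 1
lemma ap_rot {c : Fin (n+1) → Fin N} (hc : Ap c) : Ap (Rj c 1) := by
  intro d h0 h1 hEq
  rw [← Rj_add] at hEq
  have h2 : Rj c (1 + d + n) = Rj c (1 + n) := by rw [Rj_add, hEq, Rj_add]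
  have e1 : 1 + d + n = d + (n + 1) := by omega
  have e2 : 1 + n = n + 1 := by omega
  rw [e1, e2, Rj_period, Rj_add, Rj_period] at h2
  exact hc d h0 h1 h2

lemma ap_Rj {c : Fin (n+1) → Fin N} (hc : Ap c) (k : ℕ) : Ap (Rj c k) := by
  induction k with
  | zero => rwa [Rj_zero]
  | succ k ih =>
    have : Rj c (k + 1) = Rj (Rj c k) 1 := Rj_add c k 1
    rw [this]
    exact ap_rot ih

lemma PE_iff {c : Fin (n+1) → Fin N} (hc : Ap c) (j : ℕ) (hj : j < n+1)
    (hm : ordf (Rj c j) = mval c) : PE c ↔ j % 2 = 0 := by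
  constructor
  · rintro ⟨j', hj', hpar, hm'⟩
    rwa [ap_inj hc j j' hj hj' (by rw [hm, hm'])]
  · intro hpar
    exact ⟨j, hj, hpar, hm⟩

lemma PE_rot (hn : Odd n) {c : Fin (n+1) → Fin N} (hc : Ap c) : PE (Rj c 1) ↔ ¬ PE c := by
  obtain ⟨j, hj, hm⟩ := exists_min c
  have hpc : PE c ↔ j % 2 = 0 := PE_iff hc j hj hm
  set j' := if j = 0 then n else j - 1 with hj'def
  have hj' : j' < n + 1 := by rw [hj'def]; split <;> omega
  have hm' : ordf (Rj (Rj c 1) j') = mval (Rj c 1) := by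
    rw [mval_rot, ← Rj_add]
    by_cases h0 : j = 0
    · have e : 1 + j' = n + 1 := by rw [hj'def, if_pos h0]; omega
      rw [e, Rj_period]
      have h2 := hm
      rw [h0, Rj_zero] at h2
      exact h2
    · have e : 1 + j' = j := by rw [hj'def, if_neg h0]; omega
      rw [e]; exact hm
  have hpr : PE (Rj c 1) ↔ j' % 2 = 0 := PE_iff (ap_rot hc) j' hj' hm'
  rw [hpr, hpc, hj'def]
  have hn2 : n % 2 = 1 := Nat.odd_iff.1 hn
  split <;> omega

end Min

/-- Even-trace vanishing for matrices of anticommuting odd generators: if `X` is the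
`N × N` matrix whose `(i,j)` entry is the odd exterior-algebra generator `X_{ij}`, then
`Tr(X^p) = 0` for every even `p > 0`. -/
theorem stmt0 {R : Type*} [CommRing R] (N p : ℕ) (hp : Even p) (hp0 : 0 < p) :
    Matrix.trace
      ((Matrix.of fun i j : Fin N =>
          ExteriorAlgebra.ι R (Pi.single (i, j) (1 : R) : (Fin N × Fin N) → R)) ^ p) = 0 := by
  obtain ⟨n, rfl⟩ : ∃ n, p = n + 1 := ⟨p - 1, by omega⟩
  have hn : Odd n := by
    rw [Nat.even_add_one] at hp
    exact Nat.not_even_iff_odd.1 hp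
  have hn2 : n % 2 = 1 := Nat.odd_iff.1 hn
  have hn1 : 0 < n := by omega
  have trace_eq := trace_pow (Matrix.of fun i j : Fin N =>
      ExteriorAlgebra.ι R (Pi.single (i, j) (1 : R) : (Fin N × Fin N) → R)) n
  rw [trace_eq]
  have hterm : ∀ c : Fin (n+1) → Fin N,
      (List.ofFn fun m => (Matrix.of fun i j : Fin N =>
        ExteriorAlgebra.ι R (Pi.single (i, j) (1 : R) : (Fin N × Fin N) → R))
          (c m) (c (finRotate (n+1) m))).prod = trm R c :=
    fun c => (ExteriorAlgebra.ιMulti_apply _).symm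
  rw [Finset.sum_congr rfl (fun c _ => hterm c)]
  -- the key combinatorial cancellation
  classical
  have trm_rot_n : ∀ c : Fin (n+1) → Fin N, trm R (Rj c n) = - trm R c := by
    intro c
    have h := trm_rot (R := R) hn (Rj c n)
    rw [← Rj_add] at h
    have e : n + 1 = n + 1 := rfl
    rw [Rj_period] at h
    rw [h, neg_neg]
  refine Finset.sum_ninvolution
    (fun c => if trm R c = 0 then c else if PE c then Rj c 1 else Rj c n) ?_ ?_
    (fun c => Finset.mem_univ _) ?_
  · intro c
    by_cases h : trm R c = 0
    · simp [h]
    · rw [if_neg h]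
      by_cases hpe : PE c
      · rw [if_pos hpe, trm_rot hn, add_neg_cancel]
      · rw [if_neg hpe, trm_rot_n, add_neg_cancel]
  · intro c h
    have hap : Ap c := fun d h0 h1 he => h (trm_zero c d h0 h1 he)
    rw [if_neg h]
    split
    · exact hap 1 (by omega) (by omega)
    · exact hap n (by omega) (by omega)
  · intro c
    by_cases h : trm R c = 0
    · rw [if_pos h, if_pos h]
    · have hap : Ap c := fun d h0 h1 he => h (trm_zero c d h0 h1 he)
      rw [if_neg h]
      by_cases hpe : PE c
      · rw [if_pos hpe]
        have h1 : trm R (Rj c 1) = - trm R c := trm_rot hn c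
        have hne : trm R (Rj c 1) ≠ 0 := by rw [h1]; exact neg_ne_zero.2 h
        have hnp : ¬ PE (Rj c 1) := fun hx => (PE_rot hn hap).1 hx hpe
        rw [if_neg hne, if_neg hnp, ← Rj_add]
        have e : 1 + n = n + 1 := by omega
        rw [e, Rj_period]
      · rw [if_neg hpe]
        have h1 : trm R (Rj c n) = - trm R c := trm_rot_n c
        have hne : trm R (Rj c n) ≠ 0 := by rw [h1]; exact neg_ne_zero.2 h
        have ec : Rj (Rj c n) 1 = c := by rw [← Rj_add, Rj_period]
        have hiff := PE_rot hn (ap_Rj hap n)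
        rw [ec] at hiff
        have hpe' : PE (Rj c n) := by
          by_contra hx
          exact hpe (hiff.2 hx)
        rw [if_neg hne, if_pos hpe', ec]
end

section
/- Exact U(1) decoupling: Let Ψ = A + (χ/√N)·1 where A is an N×N matrix of odd exterior-algebra generators with Tr A = 0, χ is an additional odd generator anticommuting with all entries of A, and 1 is the identity matrix. Then for every odd p ≥ 3, Tr(Ψ^p) = Tr(A^p). Specifically: setting X = (χ/√N)·1, one has (A+X)^p = A^p + X·A^{p-1}, and Tr(X·A^{p-1}) = 0 because p−1 is even. -/
/-!
Put `X = (χ/√N)·1`. Since `χ` and the entries of `A` are odd, `X² = 0` and `AX = -XA`, so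
`(A + X)² = A²` and, for odd `p`, `(A + X)^p = A^(p-1)(A + X) = A^p + A^(p-1) X`. The trace of
`A^(p-1) X` is `Tr(A^(p-1)) · χ/√N`, and even powers `A^(2k)`, `k ≥ 1`, are traceless: the entries
of `A^(2k-1)` are odd, so `Tr(A · A^(2k-1)) = -Tr(A^(2k-1) · A)`.
-/

section AnticommutingSquareZero

variable {S : Type*} [Ring S] {a x : S}

theorem add_sq_of_mul_self_eq_zero (hx : x * x = 0) (hax : a * x + x * a = 0) :
    (a + x) ^ 2 = a ^ 2 := by
  rw [sq, sq, add_mul, mul_add, mul_add, hx, add_zero, add_assoc, hax, add_zero]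

theorem add_pow_of_odd_of_mul_self_eq_zero (hx : x * x = 0) (hax : a * x + x * a = 0) {p : ℕ}
    (hp : Odd p) : (a + x) ^ p = a ^ p + a ^ (p - 1) * x := by
  obtain ⟨k, rfl⟩ := hp
  rw [Nat.add_sub_cancel, pow_succ, pow_mul, add_sq_of_mul_self_eq_zero hx hax, ← pow_mul,
    mul_add, ← pow_succ]

end AnticommutingSquareZero

namespace Matrix

variable {n : Type*} [Fintype n]

theorem trace_mul_eq_neg_trace_mul_of_anticomm {S : Type*} [Ring S] {A B : Matrix n n S}
    (h : ∀ i j, A i j * B j i = -(B j i * A i j)) : trace (A * B) = -trace (B * A) := by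
  simp only [trace, diag_apply, mul_apply, ← Finset.sum_neg_distrib, h]
  exact Finset.sum_comm

theorem trace_mul_diagonal_const {S : Type*} [Semiring S] [DecidableEq n] (A : Matrix n n S)
    (x : S) : trace (A * diagonal fun _ => x) = trace A * x := by
  simp only [trace, diag_apply, mul_diagonal, Finset.sum_mul]

theorem pow_apply_mem_pow {R S : Type*} [CommSemiring R] [Semiring S] [Algebra R S]
    [DecidableEq n] {P : Submodule R S} {A : Matrix n n S} (hA : ∀ i j, A i j ∈ P) (k : ℕ)
    (i j : n) : (A ^ k) i j ∈ P ^ k := by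
  induction k generalizing i j with
  | zero =>
    rw [pow_zero, pow_zero, one_apply]
    split_ifs
    · exact Submodule.one_le.mp le_rfl
    · exact zero_mem _
  | succ k ih =>
    rw [pow_succ A, mul_apply, pow_succ P]
    exact Submodule.sum_mem _ fun l _ => Submodule.mul_mem_mul (ih i l) (hA l j)

end Matrix

namespace ExteriorAlgebra

variable {R M n : Type*} [AddCommGroup M] [Fintype n] [DecidableEq n]

section CommRing

variable [CommRing R] [Module R M]

theorem mul_eq_neg_one_pow_smul_mul_of_mem_exteriorPower {a b : ExteriorAlgebra R M}
    (ha : a ∈ LinearMap.range (ι R : M →ₗ[R] ExteriorAlgebra R M)) {k : ℕ}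
    (hb : b ∈ ⋀[R]^k M) : a * b = (-1 : R) ^ k • (b * a) := by
  obtain ⟨m, rfl⟩ := ha
  induction hb using Submodule.pow_induction_on_left' with
  | algebraMap r => rw [pow_zero, one_smul, Algebra.commutes]
  | add x y i _ _ ihx ihy => rw [mul_add, add_mul, smul_add, ihx, ihy]
  | mem_mul c hc i x _ ih =>
    obtain ⟨m', rfl⟩ := hc
    rw [← mul_assoc, eq_neg_of_add_eq_zero_left (ι_add_mul_swap m m'), neg_mul, mul_assoc, ih,
      mul_smul_comm, pow_succ, mul_neg_one, neg_smul, mul_assoc]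

theorem mul_eq_neg_mul_of_mem_range_ι {a b : ExteriorAlgebra R M}
    (ha : a ∈ LinearMap.range (ι R : M →ₗ[R] ExteriorAlgebra R M))
    (hb : b ∈ LinearMap.range (ι R : M →ₗ[R] ExteriorAlgebra R M)) : a * b = -(b * a) := by
  have hb1 : b ∈ ⋀[R]^1 M := by rwa [exteriorPower, pow_one]
  rw [mul_eq_neg_one_pow_smul_mul_of_mem_exteriorPower ha hb1, pow_one, neg_one_smul]

theorem trace_pow_eq_neg_of_even {A : Matrix n n (ExteriorAlgebra R M)}
    (hA : ∀ i j, A i j ∈ LinearMap.range (ι R : M →ₗ[R] ExteriorAlgebra R M)) {k : ℕ}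
    (hk : Even k) (hk0 : k ≠ 0) : (A ^ k).trace = -(A ^ k).trace := by
  obtain ⟨l, rfl⟩ := Nat.exists_eq_succ_of_ne_zero hk0
  have hl : Odd l := by simpa [Nat.even_add_one] using hk
  have hanticomm : ∀ i j, A i j * (A ^ l) j i = -((A ^ l) j i * A i j) := fun i j => by
    rw [mul_eq_neg_one_pow_smul_mul_of_mem_exteriorPower (hA i j)
      (Matrix.pow_apply_mem_pow hA l j i), hl.neg_one_pow, neg_one_smul]
  calc (A ^ (l + 1)).trace = (A * A ^ l).trace := by rw [pow_succ']
    _ = -(A ^ l * A).trace := Matrix.trace_mul_eq_neg_trace_mul_of_anticomm hanticomm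
    _ = -(A ^ (l + 1)).trace := by rw [pow_succ]

end CommRing

theorem trace_pow_eq_zero_of_even [Field R] [NeZero (2 : R)] [Module R M]
    {A : Matrix n n (ExteriorAlgebra R M)}
    (hA : ∀ i j, A i j ∈ LinearMap.range (ι R : M →ₗ[R] ExteriorAlgebra R M)) {k : ℕ}
    (hk : Even k) (hk0 : k ≠ 0) : (A ^ k).trace = 0 := by
  have h2 : (2 : R) • (A ^ k).trace = 0 := by
    rw [two_smul]
    nth_rewrite 1 [trace_pow_eq_neg_of_even hA hk hk0]
    exact neg_add_cancel _
  exact (smul_eq_zero.mp h2).resolve_left two_ne_zero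

end ExteriorAlgebra

open ExteriorAlgebra in
theorem stmt3_general {M : Type*} [AddCommGroup M] [Module ℂ M] (N : ℕ)
    (A : Matrix (Fin N) (Fin N) (ExteriorAlgebra ℂ M))
    (hA : ∀ i j, A i j ∈ LinearMap.range (ExteriorAlgebra.ι ℂ : M →ₗ[ℂ] ExteriorAlgebra ℂ M))
    (χ : ExteriorAlgebra ℂ M)
    (hχ : χ ∈ LinearMap.range (ExteriorAlgebra.ι ℂ : M →ₗ[ℂ] ExteriorAlgebra ℂ M))
    (p : ℕ) (hp : Odd p) (hp3 : 3 ≤ p) :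
    Matrix.trace
        ((A + Matrix.diagonal fun _ => ((Real.sqrt N : ℂ))⁻¹ • χ) ^ p) =
      Matrix.trace (A ^ p) := by
  set x := ((Real.sqrt N : ℂ))⁻¹ • χ
  have hx : x ∈ LinearMap.range (ι ℂ : M →ₗ[ℂ] ExteriorAlgebra ℂ M) :=
    Submodule.smul_mem _ _ hχ
  set X : Matrix (Fin N) (Fin N) (ExteriorAlgebra ℂ M) := Matrix.diagonal fun _ => x
  have hXX : X * X = 0 := by
    obtain ⟨m, hm⟩ := hx
    rw [Matrix.diagonal_mul_diagonal, ← hm, ι_sq_zero, Matrix.diagonal_zero]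
  have hAX : A * X + X * A = 0 := by
    ext i j
    simp only [X, Matrix.add_apply, Matrix.mul_diagonal, Matrix.diagonal_mul, Matrix.zero_apply,
      mul_eq_neg_mul_of_mem_range_ι (hA i j) hx, neg_add_cancel]
  rw [add_pow_of_odd_of_mul_self_eq_zero hXX hAX hp, Matrix.trace_add,
    Matrix.trace_mul_diagonal_const,
    trace_pow_eq_zero_of_even hA (k := p - 1) (Nat.Odd.sub_odd hp odd_one) (by omega), zero_mul,
    add_zero]

/-- Exact `U(1)` decoupling: let `Ψ = A + (χ/√N)·1`, where `A` is an `N × N` matrix of odd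
(degree-one) exterior-algebra elements with `Tr A = 0` and `χ` is a further odd degree-one
element.  Then for every odd `p ≥ 3`, `Tr(Ψ^p) = Tr(A^p)`. -/
theorem stmt3 {M : Type*} [AddCommGroup M] [Module ℂ M] (N : ℕ)
    (A : Matrix (Fin N) (Fin N) (ExteriorAlgebra ℂ M))
    (hA : ∀ i j, A i j ∈ LinearMap.range (ExteriorAlgebra.ι ℂ : M →ₗ[ℂ] ExteriorAlgebra ℂ M))
    (htr : Matrix.trace A = 0)
    (χ : ExteriorAlgebra ℂ M)
    (hχ : χ ∈ LinearMap.range (ExteriorAlgebra.ι ℂ : M →ₗ[ℂ] ExteriorAlgebra ℂ M))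
    (p : ℕ) (hp : Odd p) (hp3 : 3 ≤ p) :
    Matrix.trace
        ((A + Matrix.diagonal fun _ => ((Real.sqrt N : ℂ))⁻¹ • χ) ^ p) =
      Matrix.trace (A ^ p) :=
  stmt3_general N A hA χ hχ p hp hp3
end
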